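/- It is not the case that for all positive integers n and all nonnegative integers k, the number of partitions of n with odd mex and exactly k parts greater than 1 equals the number of partitions of n with no fixed point and exactly k parts greater than 1; in particular, these counts differ for n = 5 and k = 2. -/

import Mathlib

open scoped Classical

/-- The parts of a partition, sorted in nonincreasing order, so that
`(sortedParts p).getD (i-1) 0` is the `i`-th part `λ_i` (1-indexed). -/
def sortedParts {n : ℕ} (p : n.Partition) : List ℕ :=
  p.parts.sort (· ≥ ·)

/-- The mex of a partition: the smallest positive integer that is not a part. -/
noncomputable def mex {n : ℕ} (p : n.Partition) : ℕ :=
  sInf {m : ℕ | 0 < m ∧ m ∉ p.parts}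

/-- A partition has a fixed point if `λ_i = i` for some index `i`. -/
def hasFixedPoint {n : ℕ} (p : n.Partition) : Prop :=
  ∃ i : ℕ, 0 < i ∧ i ≤ (sortedParts p).length ∧ (sortedParts p).getD (i - 1) 0 = i

/-- `ω(λ)`: the number of parts equal to 1. -/
def omegaStat {n : ℕ} (p : n.Partition) : ℕ := p.parts.count 1

/-- `μ(λ)`: the number of parts greater than `ω(λ)`. -/
def muStat {n : ℕ} (p : n.Partition) : ℕ :=
  (p.parts.filter (fun x => omegaStat p < x)).card

/-- The crank of a partition. -/
def crank {n : ℕ} (p : n.Partition) : ℤ :=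
  if omegaStat p = 0 then (p.parts.sup : ℤ) else (muStat p : ℤ) - (omegaStat p : ℤ)

/-- `β(λ)`: the number of parts greater than 1. -/
def betaStat {n : ℕ} (p : n.Partition) : ℕ :=
  (p.parts.filter (fun x => 1 < x)).card

/-- The Durfee square size: the largest `i` with `λ_i ≥ i` (0 if none). -/
noncomputable def durfee {n : ℕ} (p : n.Partition) : ℕ :=
  sSup {i : ℕ | 0 < i ∧ i ≤ (sortedParts p).length ∧ i ≤ (sortedParts p).getD (i - 1) 0}

/-!
For `n = 5`, `k = 2` the partition `(3, 2)` has mex `1`, so the left-hand count is positive,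
whereas every partition of `5` with two parts greater than `1` has `λ₂ = 2`, so the right-hand
set is empty.
-/

theorem List.exists_eq_cons_cons_of_two_le_countP_one_lt {L : List ℕ} (hL : L.Pairwise (· ≥ ·))
    (h : 2 ≤ L.countP (1 < ·)) : ∃ a b t, L = a :: b :: t ∧ 1 < b := by
  match L, hL, h with
  | [], _, h => simp at h
  | [a], _, h => by_cases ha : 1 < a <;> simp [ha] at h
  | a :: b :: t, hL, h =>
    refine ⟨a, b, t, rfl, ?_⟩
    by_contra! hb
    have htail : (b :: t).countP (1 < ·) = 0 := by
      refine List.countP_eq_zero.mpr fun x hx => ?_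
      have hxb : x ≤ b := by
        rcases List.mem_cons.mp hx with rfl | hx
        · rfl
        · exact (List.pairwise_cons.mp (List.pairwise_cons.mp hL).2).1 x hx
      simp only [decide_eq_true_eq]
      omega
    rw [List.countP_cons, htail] at h
    split_ifs at h <;> omega

section Partition

variable {n : ℕ} (p : n.Partition)

theorem coe_sortedParts : (sortedParts p : Multiset ℕ) = p.parts :=
  Multiset.sort_eq _ _

theorem sum_sortedParts : (sortedParts p).sum = n := by
  rw [← Multiset.sum_coe, coe_sortedParts, p.parts_sum]

theorem pairwise_sortedParts : (sortedParts p).Pairwise (· ≥ ·) :=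
  Multiset.pairwise_sort _ _

theorem betaStat_eq_countP_sortedParts : betaStat p = (sortedParts p).countP (1 < ·) := by
  rw [betaStat, ← Multiset.countP_eq_card_filter, ← coe_sortedParts, Multiset.coe_countP]

/-- Once `λ₂ > 1`, we have `2 ≤ λ₂ ≤ n / 2`, which forces the fixed point `λ₂ = 2` when `n ≤ 5`. -/
theorem hasFixedPoint_of_two_le_betaStat (hn : n ≤ 5) (hβ : 2 ≤ betaStat p) :
    hasFixedPoint p := by
  rw [betaStat_eq_countP_sortedParts] at hβ
  obtain ⟨a, b, t, hL, hb⟩ :=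
    List.exists_eq_cons_cons_of_two_le_countP_one_lt (pairwise_sortedParts p) hβ
  have hba : b ≤ a := (List.pairwise_cons.mp (hL ▸ pairwise_sortedParts p)).1 b (by simp)
  have hsum : a + (b + t.sum) = n := by simpa [hL] using sum_sortedParts p
  refine ⟨2, two_pos, by simp [hL], ?_⟩
  simp only [hL, List.getD_cons_succ, List.getD_cons_zero]
  omega

theorem mex_eq_one_of_one_notMem (h : 1 ∉ p.parts) : mex p = 1 :=
  le_antisymm (Nat.sInf_le ⟨one_pos, h⟩) (Nat.sInf_mem (s := {m | 0 < m ∧ m ∉ p.parts})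
    ⟨1, one_pos, h⟩).1

end Partition

def partition32 : Nat.Partition 5 := ⟨{3, 2}, by decide, by decide⟩

theorem odd_mex_ne_no_fixed_point_refined :
    (¬ ∀ (n k : ℕ), 0 < n →
      {p : Nat.Partition n | Odd (mex p) ∧ betaStat p = k}.ncard
        = {p : Nat.Partition n | ¬ hasFixedPoint p ∧ betaStat p = k}.ncard) ∧
    {p : Nat.Partition 5 | Odd (mex p) ∧ betaStat p = 2}.ncard
      ≠ {p : Nat.Partition 5 | ¬ hasFixedPoint p ∧ betaStat p = 2}.ncard := by
  have hne : {p : Nat.Partition 5 | Odd (mex p) ∧ betaStat p = 2}.ncard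
      ≠ {p : Nat.Partition 5 | ¬ hasFixedPoint p ∧ betaStat p = 2}.ncard := by
    have hmem : partition32 ∈ {p : Nat.Partition 5 | Odd (mex p) ∧ betaStat p = 2} :=
      ⟨by rw [mex_eq_one_of_one_notMem _ (by decide)]; exact odd_one, by decide⟩
    have hempty : {p : Nat.Partition 5 | ¬ hasFixedPoint p ∧ betaStat p = 2} = ∅ :=
      Set.eq_empty_of_forall_notMem fun p ⟨hfp, hβ⟩ =>
        hfp (hasFixedPoint_of_two_le_betaStat p le_rfl hβ.ge)
    rw [hempty, Set.ncard_empty]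
    exact ((Set.ncard_pos (Set.toFinite _)).mpr ⟨_, hmem⟩).ne'
  exact ⟨fun h => hne (h 5 2 (by norm_num)), hne⟩
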